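/- For all t > 0 and x, y > 1, ∫₀^t ((x-1)/x)(2πs³)^{-1/2} e^{-(x-1)²/(2s)} · (2π(t-s))^{-1/2} · y · (e^{-(1-y)²/(2(t-s))} - e^{-(1+y)²/(2(t-s))}) ds = (2πt)^{-1/2} (y/x) ( e^{-(x+y-2)²/(2t)} - e^{-(x+y)²/(2t)} ). -/

import Mathlib

/-!
The substitution `s = t / (1 + r²)` turns `∫₀ᵗ q_a(s) φ_{t-s}(b) ds`, the first-passage density of
level `a` convolved with the heat kernel at `b`, into a multiple of
`∫₀^∞ exp (-((p r)² + (q / r)²) / 2) dr` with `p = a / √t`, `q = b / √t`. This integral yields to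
the Cauchy–Schlömilch trick: `r ↦ p r - q / r` maps `(0, ∞)` increasingly onto `ℝ` and turns
`(p + q / r²)` times the integrand into a Gaussian, while the involution `r ↦ q / (p r)` shows
that the two halves of the weight contribute equally. The outcome is `φ_t(a + b)`, and the Hunt
correction term is the difference of two such identities, for `b = y - 1` and `b = y + 1`.
-/

open MeasureTheory Real intervalIntegral Set

theorem integrable_exp_neg_sq_div_two : Integrable fun u : ℝ => exp (-u ^ 2 / 2) := by
  simpa [neg_div, div_eq_inv_mul] using integrable_exp_neg_mul_sq (by norm_num : (0 : ℝ) < 1 / 2)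

theorem integral_exp_neg_sq_div_two : ∫ u : ℝ, exp (-u ^ 2 / 2) = √(2 * π) := by
  simpa [neg_div, div_eq_inv_mul, mul_comm] using integral_gaussian (1 / 2)

section Substitution

variable {E : Type*} [NormedAddCommGroup E] [NormedSpace ℝ E] {p q c t : ℝ}

theorem image_mul_sub_div_Ioi (hp : 0 < p) (hq : 0 < q) :
    (fun r => p * r - q / r) '' Ioi 0 = univ := by
  refine eq_univ_of_forall fun v => ?_
  set D := √(v ^ 2 + 4 * p * q)
  have hD : D ^ 2 = v ^ 2 + 4 * p * q := sq_sqrt (by positivity)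
  have hvD : 0 < v + D := by
    have : |v| < D := by
      rw [← sqrt_sq_eq_abs]; exact sqrt_lt_sqrt (sq_nonneg v) (by nlinarith [mul_pos hp hq])
    linarith [neg_abs_le v]
  refine ⟨(v + D) / (2 * p), div_pos hvD (by positivity), ?_⟩
  field_simp
  linear_combination hD

theorem hasDerivAt_const_div (c : ℝ) {r : ℝ} (hr : r ≠ 0) :
    HasDerivAt (fun r => c / r) (-c / r ^ 2) r := by
  simpa [div_eq_mul_inv, neg_div] using (hasDerivAt_inv hr).const_mul c

theorem monotoneOn_mul_sub_div (hp : 0 ≤ p) (hq : 0 ≤ q) :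
    MonotoneOn (fun r => p * r - q / r) (Ioi 0) := fun _ hr _ _ hrs =>
  sub_le_sub (mul_le_mul_of_nonneg_left hrs hp) (div_le_div_of_nonneg_left hq hr hrs)

theorem hasDerivAt_mul_sub_div (p q : ℝ) {r : ℝ} (hr : r ≠ 0) :
    HasDerivAt (fun r => p * r - q / r) (p + q / r ^ 2) r := by
  simpa [neg_div] using ((hasDerivAt_id r).const_mul p).fun_sub (hasDerivAt_const_div q hr)

theorem integral_comp_mul_sub_div_Ioi (g : ℝ → E) (hp : 0 < p) (hq : 0 < q) :
    ∫ r in Ioi 0, (p + q / r ^ 2) • g (p * r - q / r) = ∫ u, g u := by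
  have := integral_image_eq_integral_deriv_smul_of_monotoneOn measurableSet_Ioi
    (fun r hr => (hasDerivAt_mul_sub_div p q (ne_of_gt hr)).hasDerivWithinAt)
    (monotoneOn_mul_sub_div hp.le hq.le) g
  rwa [image_mul_sub_div_Ioi hp hq, setIntegral_univ, eq_comm] at this

theorem integrableOn_comp_mul_sub_div_Ioi_iff (g : ℝ → E) (hp : 0 < p) (hq : 0 < q) :
    IntegrableOn (fun r => (p + q / r ^ 2) • g (p * r - q / r)) (Ioi 0) ↔ Integrable g := by
  rw [← integrableOn_univ, ← image_mul_sub_div_Ioi hp hq,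
    integrableOn_image_iff_integrableOn_deriv_smul_of_monotoneOn measurableSet_Ioi
      (fun r hr => (hasDerivAt_mul_sub_div p q (ne_of_gt hr)).hasDerivWithinAt)
      (monotoneOn_mul_sub_div hp.le hq.le)]

theorem image_div_Ioi (hc : 0 < c) : (fun r => c / r) '' Ioi 0 = Ioi 0 := by
  refine Subset.antisymm (image_subset_iff.2 fun r hr => div_pos hc hr) fun s hs => ?_
  exact ⟨c / s, div_pos hc hs, div_div_cancel₀ hc.ne'⟩

theorem integral_comp_div_Ioi (g : ℝ → E) (hc : 0 < c) :
    ∫ r in Ioi 0, (c / r ^ 2) • g (c / r) = ∫ r in Ioi 0, g r := by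
  conv_rhs => rw [← image_div_Ioi hc]
  rw [integral_image_eq_integral_deriv_smul_of_antitoneOn measurableSet_Ioi
      (fun r hr => (hasDerivAt_const_div c (ne_of_gt hr)).hasDerivWithinAt)
      (fun r hr s _ hrs => div_le_div_of_nonneg_left hc.le hr hrs)]
  simp only [neg_div, neg_neg]

theorem image_div_one_add_sq_Ioi (ht : 0 < t) :
    (fun r => t / (1 + r ^ 2)) '' Ioi 0 = Ioo 0 t := by
  refine Subset.antisymm (image_subset_iff.2 fun r hr => ⟨by positivity, ?_⟩) fun s hs => ?_
  · exact div_lt_self ht (by simpa using pow_pos (mem_Ioi.1 hr) 2)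
  · have hts : 0 < (t - s) / s := div_pos (sub_pos.2 hs.2) hs.1
    refine ⟨√((t - s) / s), sqrt_pos.2 hts, ?_⟩
    beta_reduce
    rw [sq_sqrt hts.le, one_add_div hs.1.ne', add_sub_cancel, div_div_cancel₀ ht.ne']

theorem hasDerivAt_div_one_add_sq (t r : ℝ) :
    HasDerivAt (fun r => t / (1 + r ^ 2)) (-(2 * t * r / (1 + r ^ 2) ^ 2)) r := by
  refine ((hasDerivAt_const r t).fun_div ((hasDerivAt_pow 2 r).const_add 1)
    (by positivity)).congr_deriv ?_
  push_cast
  ring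

theorem antitoneOn_div_one_add_sq (ht : 0 ≤ t) :
    AntitoneOn (fun r => t / (1 + r ^ 2)) (Ioi 0) := fun r hr s _ hrs =>
  div_le_div_of_nonneg_left ht (by positivity) (by gcongr; exact le_of_lt hr)

theorem integral_comp_div_one_add_sq_Ioi (g : ℝ → E) (ht : 0 < t) :
    ∫ r in Ioi 0, (2 * t * r / (1 + r ^ 2) ^ 2) • g (t / (1 + r ^ 2)) = ∫ s in Ioo 0 t, g s := by
  rw [← image_div_one_add_sq_Ioi ht,
    integral_image_eq_integral_deriv_smul_of_antitoneOn measurableSet_Ioi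
      (fun r _ => (hasDerivAt_div_one_add_sq t r).hasDerivWithinAt)
      (antitoneOn_div_one_add_sq ht.le)]
  simp only [neg_neg]

theorem integrableOn_comp_div_one_add_sq_Ioi_iff (g : ℝ → E) (ht : 0 < t) :
    IntegrableOn (fun r => (2 * t * r / (1 + r ^ 2) ^ 2) • g (t / (1 + r ^ 2))) (Ioi 0) ↔
      IntegrableOn g (Ioo 0 t) := by
  rw [← image_div_one_add_sq_Ioi ht,
    integrableOn_image_iff_integrableOn_deriv_smul_of_antitoneOn measurableSet_Ioi
      (fun r _ => (hasDerivAt_div_one_add_sq t r).hasDerivWithinAt)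
      (antitoneOn_div_one_add_sq ht.le)]
  simp only [neg_neg]

end Substitution

section GaussianOnHalfLine

variable {p q : ℝ}

theorem exp_neg_sq_add_sq_div {r : ℝ} (hr : r ≠ 0) :
    exp (-((p * r) ^ 2 + (q / r) ^ 2) / 2) = exp (-(p * q)) * exp (-(p * r - q / r) ^ 2 / 2) := by
  rw [← exp_add]
  congr 1
  field_simp
  ring

theorem exp_neg_sq_add_sq_div_comp_div (hp : p ≠ 0) (hq : q ≠ 0) {r : ℝ} (hr : r ≠ 0) :
    exp (-((p * (q / p / r)) ^ 2 + (q / (q / p / r)) ^ 2) / 2) =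
      exp (-((p * r) ^ 2 + (q / r) ^ 2) / 2) := by
  congr 1
  field_simp
  ring

theorem integral_exp_neg_sq_add_sq_div_Ioi (hp : 0 < p) (hq : 0 < q) :
    IntegrableOn (fun r => exp (-((p * r) ^ 2 + (q / r) ^ 2) / 2)) (Ioi 0) ∧
      ∫ r in Ioi 0, exp (-((p * r) ^ 2 + (q / r) ^ 2) / 2) =
        √(2 * π) / (2 * p) * exp (-(p * q)) := by
  set F : ℝ → ℝ := fun r => exp (-((p * r) ^ 2 + (q / r) ^ 2) / 2)
  have hF_pos : ∀ r, 0 < F r := fun r => exp_pos _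
  have hweight : EqOn (fun r => (p + q / r ^ 2) * F r)
      (fun r => exp (-(p * q)) * ((p + q / r ^ 2) • exp (-(p * r - q / r) ^ 2 / 2))) (Ioi 0) := by
    intro r hr
    simp only [smul_eq_mul, exp_neg_sq_add_sq_div (ne_of_gt hr), F]
    ring
  have hweight_int : IntegrableOn (fun r => (p + q / r ^ 2) * F r) (Ioi 0) :=
    IntegrableOn.congr_fun (((integrableOn_comp_mul_sub_div_Ioi_iff _ hp hq).2
      integrable_exp_neg_sq_div_two).const_mul _) hweight.symm measurableSet_Ioi
  have hweight_val : ∫ r in Ioi 0, (p + q / r ^ 2) * F r = exp (-(p * q)) * √(2 * π) := by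
    rw [setIntegral_congr_fun measurableSet_Ioi hweight, MeasureTheory.integral_const_mul,
      integral_comp_mul_sub_div_Ioi (fun u => exp (-u ^ 2 / 2)) hp hq, integral_exp_neg_sq_div_two]
  have hF_int : IntegrableOn F (Ioi 0) := by
    refine (hweight_int.const_mul p⁻¹).mono' (by fun_prop) ?_
    filter_upwards [ae_restrict_mem measurableSet_Ioi] with r hr
    rw [norm_of_nonneg (hF_pos r).le, ← mul_assoc, inv_mul_eq_div, add_div, div_self hp.ne',
      add_mul, one_mul, le_add_iff_nonneg_right]
    exact mul_nonneg (by positivity) (hF_pos r).le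
  have htail_int : IntegrableOn (fun r => q / r ^ 2 * F r) (Ioi 0) :=
    (hweight_int.sub (hF_int.const_mul p)).congr_fun (fun r _ => by simp only [Pi.sub_apply]; ring)
      measurableSet_Ioi
  -- `r ↦ q / (p r)` exchanges the two summands of the exponent
  have htail_val : ∫ r in Ioi 0, q / r ^ 2 * F r = p * ∫ r in Ioi 0, F r := by
    rw [← integral_comp_div_Ioi F (div_pos hq hp), ← MeasureTheory.integral_const_mul]
    refine setIntegral_congr_fun measurableSet_Ioi fun r hr => ?_
    simp only [smul_eq_mul, F, exp_neg_sq_add_sq_div_comp_div hp.ne' hq.ne' (ne_of_gt hr)]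
    field_simp
  refine ⟨hF_int, ?_⟩
  have hsplit : ∫ r in Ioi 0, (p + q / r ^ 2) * F r = 2 * p * ∫ r in Ioi 0, F r := by
    simp only [add_mul]
    rw [integral_add (hF_int.const_mul p) htail_int, MeasureTheory.integral_const_mul, htail_val]
    ring
  rw [hweight_val] at hsplit
  field_simp
  linarith

end GaussianOnHalfLine

/- `levyDensity a` is the density of the first passage time of Brownian motion to level `a`.
In the paper's notation `q_x^{(1/2)} = levyDensity (x - 1) / x` and
`p^{(1/2)}(r, 1, y) = y * (heatKernel r (y - 1) - heatKernel r (y + 1))`. -/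
noncomputable def levyDensity (a s : ℝ) : ℝ :=
  a * (2 * π * s ^ 3) ^ (-(1 / 2) : ℝ) * exp (-a ^ 2 / (2 * s))

noncomputable def heatKernel (t x : ℝ) : ℝ :=
  (2 * π * t) ^ (-(1 / 2) : ℝ) * exp (-x ^ 2 / (2 * t))

theorem sq_rpow_neg_one_half {x : ℝ} (hx : 0 ≤ x) : (x ^ 2) ^ (-(1 / 2) : ℝ) = x⁻¹ := by
  rw [rpow_neg (sq_nonneg x), ← sqrt_eq_rpow, sqrt_sq hx]

theorem heatKernel_sq {σ : ℝ} (hσ : 0 ≤ σ) (x : ℝ) :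
    heatKernel (σ ^ 2) x = (√(2 * π) * σ)⁻¹ * exp (-x ^ 2 / (2 * σ ^ 2)) := by
  rw [heatKernel, ← sq_rpow_neg_one_half (by positivity), mul_pow, sq_sqrt (by positivity)]

theorem levyDensity_mul_heatKernel_comp_div_one_add_sq {σ r : ℝ} (hσ : 0 < σ) (hr : 0 < r)
    (a b : ℝ) :
    2 * σ ^ 2 * r / (1 + r ^ 2) ^ 2 *
        (levyDensity a (σ ^ 2 / (1 + r ^ 2)) * heatKernel (σ ^ 2 - σ ^ 2 / (1 + r ^ 2)) b) =
      a / (π * σ ^ 2) * exp (-(a ^ 2 + b ^ 2) / (2 * σ ^ 2)) *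
        exp (-((a / σ * r) ^ 2 + (b / σ / r) ^ 2) / 2) := by
  set s := σ ^ 2 / (1 + r ^ 2)
  have hs : 0 < s := by positivity
  have hts : σ ^ 2 - s = σ ^ 2 * r ^ 2 / (1 + r ^ 2) := by simp only [s]; field_simp; ring
  have hprod :
      2 * π * s ^ 3 * (2 * π * (σ ^ 2 - s)) = (2 * π * σ ^ 4 * r / (1 + r ^ 2) ^ 2) ^ 2 := by
    rw [hts]; simp only [s]; field_simp
  have hrpow : (2 * π * s ^ 3) ^ (-(1 / 2) : ℝ) * (2 * π * (σ ^ 2 - s)) ^ (-(1 / 2) : ℝ) =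
      (2 * π * σ ^ 4 * r / (1 + r ^ 2) ^ 2)⁻¹ := by
    rw [← mul_rpow (by positivity) (by rw [hts]; positivity), hprod,
      sq_rpow_neg_one_half (by positivity)]
  calc _ = 2 * σ ^ 2 * r / (1 + r ^ 2) ^ 2 * a *
        ((2 * π * s ^ 3) ^ (-(1 / 2) : ℝ) * (2 * π * (σ ^ 2 - s)) ^ (-(1 / 2) : ℝ)) *
        exp (-a ^ 2 / (2 * s) + -b ^ 2 / (2 * (σ ^ 2 - s))) := by
          rw [exp_add, levyDensity, heatKernel]; ring
    _ = _ := by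
      rw [hrpow, mul_assoc (a / _), ← exp_add, hts]
      congr 1
      · field_simp
      · congr 1
        simp only [s]
        field_simp
        ring

theorem integral_levyDensity_mul_heatKernel_sub {t a b : ℝ} (ht : 0 < t) (ha : 0 < a)
    (hb : 0 < b) :
    IntervalIntegrable (fun s => levyDensity a s * heatKernel (t - s) b) volume 0 t ∧
      ∫ s in 0..t, levyDensity a s * heatKernel (t - s) b = heatKernel t (a + b) := by
  obtain ⟨σ, hσ, rfl⟩ : ∃ σ, 0 < σ ∧ t = σ ^ 2 := ⟨√t, sqrt_pos.2 ht, (sq_sqrt ht.le).symm⟩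
  obtain ⟨hF_int, hF_val⟩ := integral_exp_neg_sq_add_sq_div_Ioi (div_pos ha hσ) (div_pos hb hσ)
  have hsubst := fun r (hr : r ∈ Ioi 0) =>
    levyDensity_mul_heatKernel_comp_div_one_add_sq (r := r) hσ hr a b
  rw [intervalIntegrable_iff_integrableOn_Ioo_of_le ht.le, integral_of_le ht.le,
    integral_Ioc_eq_integral_Ioo, ← integral_comp_div_one_add_sq_Ioi _ ht,
    ← integrableOn_comp_div_one_add_sq_Ioi_iff _ ht]
  simp only [smul_eq_mul]
  rw [setIntegral_congr_fun measurableSet_Ioi hsubst]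
  refine ⟨IntegrableOn.congr_fun (hF_int.const_mul _) (fun r hr => (hsubst r hr).symm)
    measurableSet_Ioi, ?_⟩
  rw [MeasureTheory.integral_const_mul, hF_val, heatKernel_sq hσ.le,
    show -(a + b) ^ 2 / (2 * σ ^ 2) = -(a ^ 2 + b ^ 2) / (2 * σ ^ 2) + -(a / σ * (b / σ)) by
      field_simp; ring, exp_add]
  field_simp
  rw [sq_sqrt (by positivity)]

theorem hunt_correction_half (t x y : ℝ) (ht : 0 < t) (hx : 1 < x) (hy : 1 < y) :
    ∫ s in (0:ℝ)..t,
        ((x - 1)/x) * (2 * Real.pi * s^3) ^ (-(1/2) : ℝ) * Real.exp (-(x-1)^2/(2*s)) *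
          ((2 * Real.pi * (t - s)) ^ (-(1/2) : ℝ) * y *
            (Real.exp (-(1-y)^2/(2*(t-s))) - Real.exp (-(1+y)^2/(2*(t-s)))))
      = (2 * Real.pi * t) ^ (-(1/2) : ℝ) * (y/x) *
          (Real.exp (-(x+y-2)^2/(2*t)) - Real.exp (-(x+y)^2/(2*t))) := by
  have ha : 0 < x - 1 := by linarith
  obtain ⟨hint₁, hval₁⟩ := integral_levyDensity_mul_heatKernel_sub ht ha (by linarith : 0 < y - 1)
  obtain ⟨hint₂, hval₂⟩ := integral_levyDensity_mul_heatKernel_sub ht ha (by linarith : 0 < y + 1)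
  calc _ = ∫ s in (0:ℝ)..t, y / x * (levyDensity (x - 1) s * heatKernel (t - s) (y - 1) -
        levyDensity (x - 1) s * heatKernel (t - s) (y + 1)) := by
          congr 1; ext s
          rw [levyDensity, heatKernel, heatKernel, sub_sq_comm 1 y, add_comm 1 y]
          ring
    _ = y / x * (heatKernel t (x - 1 + (y - 1)) - heatKernel t (x - 1 + (y + 1))) := by
          rw [intervalIntegral.integral_const_mul, integral_sub hint₁ hint₂, hval₁, hval₂]
    _ = _ := by
          rw [heatKernel, heatKernel, show x - 1 + (y - 1) = x + y - 2 by ring,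
            show x - 1 + (y + 1) = x + y by ring]
          ring
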